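/- arXiv:2406.02716 — 2 statements merged into one kernel-verified Lean document; each statement's English description precedes it below -/
import Mathlib

section
/- Run Algorithm 1 with η_t = t+1 and noise vectors satisfying ‖b_t‖ ≤ b_max for all t. Then for every t ∈ {1, …, T−1}, ‖x_t − x_{t−1}‖ ≤ (1/β)·max{ ‖η_i ∇f(x_i, d) − η_{i−1} ∇f(x_{i−1}, d)‖ : 0 ≤ i ≤ t−1, d ∈ ℬ_i } + b_max/(t+1) + 2‖C‖/(t+2). -/
/-!
With `η_t = t + 1` the interpolation weight is `τ_{t+1} = 2 / (t + 3)`, and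
`x_{t+1} − x_t = (1 − τ_{t+1}) (y_{t+1} − x_t) + τ_{t+1} (z_{t+1} − x_t)`.
By convexity every iterate lies in `C`, so `‖z_{t+1} − x_t‖ ≤ ‖C‖`. Projection onto a convex
set moves no point farther from any point of the set, so
`‖y_{t+1} − x_t‖ ≤ ‖∇_t‖/β + ‖b_t‖/(t + 1)`; and `∇_t` is an average over `i ≤ t` of the `Δ_i`,
each an average over the batch of the per-sample differences, so `‖∇_t‖` is at most their
maximum. The weights `(t + 1)/(t + 3) ≤ 1` and `1/(t + 3) ≤ 1/(t + 2)` then give the bound.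
-/

open scoped InnerProductSpace

open Finset

theorem Convex.norm_sub_le_of_forall_norm_sub_le {F : Type*} [NormedAddCommGroup F]
    [InnerProductSpace ℝ F] {K : Set F} (hK : Convex ℝ K) {u p w : F} (hp : p ∈ K)
    (hmin : ∀ v ∈ K, ‖p - u‖ ≤ ‖v - u‖) (hw : w ∈ K) : ‖p - w‖ ≤ ‖u - w‖ := by
  have : Nonempty K := ⟨⟨p, hp⟩⟩
  have hbdd : BddBelow (Set.range fun v : K => ‖u - v‖) :=
    ⟨0, by rintro _ ⟨v, rfl⟩; exact norm_nonneg _⟩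
  have hinf : ‖u - p‖ = ⨅ v : K, ‖u - v‖ :=
    le_antisymm (le_ciInf fun v => by simpa only [norm_sub_rev u] using hmin v v.2)
      (ciInf_le hbdd ⟨p, hp⟩)
  have hinner := (norm_eq_iInf_iff_real_inner_le_zero hK hp).1 hinf w hw
  have hexpand : ‖u - w‖ ^ 2 = ‖u - p‖ ^ 2 - 2 * ⟪u - p, w - p⟫_ℝ + ‖w - p‖ ^ 2 := by
    rw [← norm_sub_sq_real, sub_sub_sub_cancel_right]
  rw [norm_sub_rev p w]
  nlinarith [norm_nonneg (u - w), norm_nonneg (w - p), sq_nonneg ‖u - p‖]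

theorem Convex.norm_proj_sub_smul_add_smul_sub_le {F : Type*} [NormedAddCommGroup F]
    [InnerProductSpace ℝ F] {K : Set F} (hK : Convex ℝ K) {proj : F → F}
    (hproj : ∀ u, proj u ∈ K ∧ ∀ v ∈ K, ‖proj u - u‖ ≤ ‖v - u‖) {x : F} (hx : x ∈ K)
    {a c : ℝ} (ha : 0 ≤ a) (hc : 0 ≤ c) (g v : F) :
    ‖proj (x - a • g + c • v) - x‖ ≤ a * ‖g‖ + c * ‖v‖ :=
  calc ‖proj (x - a • g + c • v) - x‖ ≤ ‖c • v - a • g‖ :=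
        (hK.norm_sub_le_of_forall_norm_sub_le (hproj _).1 (hproj _).2 hx).trans_eq
          (by congr 1; abel)
    _ ≤ a * ‖g‖ + c * ‖v‖ := by
        rw [add_comm, ← norm_smul_of_nonneg ha, ← norm_smul_of_nonneg hc]
        exact norm_sub_le _ _

theorem norm_one_sub_smul_add_smul_sub_le {E : Type*} [SeminormedAddCommGroup E]
    [NormedSpace ℝ E] {τ : ℝ} (h0 : 0 ≤ τ) (h1 : τ ≤ 1) (x y z : E) :
    ‖(1 - τ) • y + τ • z - x‖ ≤ (1 - τ) * ‖y - x‖ + τ * ‖z - x‖ := by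
  have hsplit : (1 - τ) • y + τ • z - x = (1 - τ) • (y - x) + τ • (z - x) := by module
  rw [hsplit]
  refine (norm_add_le _ _).trans_eq ?_
  rw [norm_smul_of_nonneg (by linarith), norm_smul_of_nonneg h0]

theorem Convex.forall_mem_of_eq_one_sub_smul_add_smul {F : Type*} [AddCommGroup F] [Module ℝ F]
    {K : Set F} (hK : Convex ℝ K) {x y z : ℕ → F} {τ : ℕ → ℝ} {T : ℕ} (hx0 : x 0 ∈ K)
    (hy : ∀ t < T, y (t + 1) ∈ K) (hz : ∀ t < T, z (t + 1) ∈ K)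
    (hτ : ∀ t < T, τ (t + 1) ∈ Set.Icc 0 1)
    (hx : ∀ t < T, x (t + 1) = (1 - τ (t + 1)) • y (t + 1) + τ (t + 1) • z (t + 1)) :
    ∀ t ≤ T, x t ∈ K := by
  intro t
  induction t with
  | zero => exact fun _ => hx0
  | succ t _ =>
    intro ht
    rw [hx t ht]
    exact hK (hy t ht) (hz t ht) (by linarith [(hτ t ht).2]) (hτ t ht).1 (by ring)

theorem norm_inv_card_smul_sum_le {ι E : Type*} [SeminormedAddCommGroup E] [NormedSpace ℝ E]
    {s : Finset ι} (hs : s.Nonempty) {v : ι → E} {S : ℝ} (hv : ∀ i ∈ s, ‖v i‖ ≤ S) :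
    ‖(#s : ℝ)⁻¹ • ∑ i ∈ s, v i‖ ≤ S := by
  have hcard : (0 : ℝ) < #s := by exact_mod_cast hs.card_pos
  rw [norm_smul, norm_inv, Real.norm_natCast, inv_mul_le_iff₀ hcard]
  simpa only [sum_const, nsmul_eq_mul] using norm_sum_le_of_le s hv

theorem norm_inv_smul_sum_range_inv_smul_sum_le_sup' {E : Type*} [SeminormedAddCommGroup E]
    [NormedSpace ℝ E] {B t : ℕ} (hne : (range (t + 1) ×ˢ (univ : Finset (Fin B))).Nonempty)
    {Δ : ℕ → E} {g : ℕ → Fin B → E} (hΔ : ∀ i ≤ t, Δ i = (B : ℝ)⁻¹ • ∑ j, g i j) :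
    ‖((t : ℝ) + 1)⁻¹ • ∑ i ∈ range (t + 1), Δ i‖ ≤
      (range (t + 1) ×ˢ univ).sup' hne fun p => ‖g p.1 p.2‖ := by
  set S := (range (t + 1) ×ˢ univ).sup' hne fun p => ‖g p.1 p.2‖
  have hΔ_le : ∀ i ∈ range (t + 1), ‖Δ i‖ ≤ S := fun i hi => by
    have hi : i ≤ t := Nat.lt_succ_iff.1 (mem_range.1 hi)
    have hg : ∀ j ∈ univ, ‖g i j‖ ≤ S := fun j _ =>
      le_sup' (fun p : ℕ × Fin B => ‖g p.1 p.2‖) (b := (i, j))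
        (mem_product.2 ⟨mem_range.2 (Nat.lt_succ_of_le hi), mem_univ j⟩)
    simpa [hΔ i hi] using norm_inv_card_smul_sum_le hne.snd hg
  simpa using norm_inv_card_smul_sum_le nonempty_range_add_one hΔ_le

theorem sum_range_natCast_add_one (m : ℕ) :
    ∑ i ∈ range m, ((i : ℝ) + 1) = m * (m + 1) / 2 := by
  induction m with
  | zero => simp
  | succ m ih => rw [sum_range_succ, ih]; push_cast; ring

theorem add_one_div_sum_range_add_one (m : ℕ) :
    ((m : ℝ) + 1) / ∑ i ∈ range (m + 1), ((i : ℝ) + 1) = 2 / (m + 2) := by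
  rw [sum_range_natCast_add_one]
  push_cast
  field_simp
  ring

theorem two_div_add_three_mem_Icc (t : ℝ) (ht : 0 ≤ t) : 2 / (t + 3) ∈ Set.Icc (0 : ℝ) 1 :=
  ⟨by positivity, (div_le_one (by positivity)).2 (by linarith)⟩

theorem one_sub_two_div_mul_add_le {t a c D : ℝ} (ht : 0 ≤ t) (ha : 0 ≤ a) (hc : 0 ≤ c) :
    (1 - 2 / (t + 3)) * (a + c / (t + 1)) + 2 / (t + 3) * D
      ≤ a + c / (t + 2) + 2 * D / (t + 3) := by
  have hweight : 1 - 2 / (t + 3) = (t + 1) / (t + 3) := by field_simp; ring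
  have ha' : (t + 1) / (t + 3) * a ≤ a :=
    mul_le_of_le_one_left ha ((div_le_one (by positivity)).2 (by linarith))
  have hc' : (t + 1) / (t + 3) * (c / (t + 1)) ≤ c / (t + 2) := by
    calc (t + 1) / (t + 3) * (c / (t + 1)) = c / (t + 3) := by field_simp
      _ ≤ c / (t + 2) := div_le_div_of_nonneg_left hc (by positivity) (by linarith)
  rw [hweight, mul_add, div_mul_eq_mul_div 2, mul_comm (2 : ℝ) D]
  linarith

/-- The paper's `t` is `t + 1` here; the `i = 0` summand encodes `η_{−1} = 0`. -/
theorem stmt_3_general {n : ℕ} (C : Set (EuclideanSpace ℝ (Fin n)))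
    (hCbdd : Bornology.IsBounded C) (hCconv : Convex ℝ C)
    (hC0 : (0 : EuclideanSpace ℝ (Fin n)) ∈ C)
    (proj : EuclideanSpace ℝ (Fin n) → EuclideanSpace ℝ (Fin n))
    (hproj : ∀ u, proj u ∈ C ∧ ∀ v ∈ C, ‖proj u - u‖ ≤ ‖v - u‖)
    (𝒟 : Type*)
    (G : EuclideanSpace ℝ (Fin n) → 𝒟 → EuclideanSpace ℝ (Fin n))
    (T B : ℕ) (hB : 0 < B)
    (ℬ : ℕ → Fin B → 𝒟)
    (η : ℕ → ℝ) (hη : ∀ t, η t = t + 1)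
    (β : ℝ) (hβpos : 0 < β)
    (b : ℕ → EuclideanSpace ℝ (Fin n)) (bmax : ℝ) (hb : ∀ t < T, ‖b t‖ ≤ bmax)
    (x z y Δ gr : ℕ → EuclideanSpace ℝ (Fin n)) (τ : ℕ → ℝ)
    (hτ : ∀ t ≤ T, τ t = η t / ∑ i ∈ Finset.range (t + 1), η i)
    (hx0 : x 0 = 0)
    (hΔ0 : Δ 0 = (B : ℝ)⁻¹ • ∑ i : Fin B, η 0 • G (x 0) (ℬ 0 i))
    (hΔ : ∀ t, t + 1 < T →
      Δ (t + 1) = (B : ℝ)⁻¹ • ∑ i : Fin B,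
        (η (t + 1) • G (x (t + 1)) (ℬ (t + 1) i) - η t • G (x t) (ℬ (t + 1) i)))
    (hgr : ∀ t < T, gr t = (η t)⁻¹ • ∑ i ∈ Finset.range (t + 1), Δ i)
    (hz : ∀ t < T, z (t + 1) = proj (z t - (η t / β) • gr t + b t))
    (hy : ∀ t < T, y (t + 1) = proj (x t - β⁻¹ • gr t + (η t)⁻¹ • b t))
    (hxs : ∀ t < T, x (t + 1) = (1 - τ (t + 1)) • y (t + 1) + τ (t + 1) • z (t + 1)) :
    ∀ t, t + 1 < T →
      ‖x (t + 1) - x t‖ ≤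
        β⁻¹ * ((Finset.range (t + 1) ×ˢ (Finset.univ : Finset (Fin B))).sup'
            (Finset.Nonempty.product
              (Finset.nonempty_range_iff.mpr (Nat.succ_ne_zero t))
              (Finset.univ_nonempty_iff.mpr (Fin.pos_iff_nonempty.mp hB)))
            (fun p => ‖η p.1 • G (x p.1) (ℬ p.1 p.2) -
                (if p.1 = 0 then (0 : EuclideanSpace ℝ (Fin n))
                  else η (p.1 - 1) • G (x (p.1 - 1)) (ℬ p.1 p.2))‖))
          + bmax / (t + 2) + 2 * Metric.diam C / (t + 3) := by
  have hτ_eq : ∀ s, s + 1 ≤ T → τ (s + 1) = 2 / (s + 3) := fun s hs => by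
    rw [hτ _ hs, hη, sum_congr rfl fun i _ => hη i, add_one_div_sum_range_add_one]
    push_cast
    ring
  have hτ_mem : ∀ s, s + 1 ≤ T → τ (s + 1) ∈ Set.Icc 0 1 := fun s hs =>
    hτ_eq s hs ▸ two_div_add_three_mem_Icc s s.cast_nonneg
  have hxC := hCconv.forall_mem_of_eq_one_sub_smul_add_smul (hx0 ▸ hC0)
    (fun t ht => hy t ht ▸ (hproj _).1) (fun t ht => hz t ht ▸ (hproj _).1) hτ_mem hxs
  intro t ht
  have hΔavg : ∀ i ≤ t, Δ i = (B : ℝ)⁻¹ • ∑ j, (η i • G (x i) (ℬ i j) -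
      if i = 0 then 0 else η (i - 1) • G (x (i - 1)) (ℬ i j)) := by
    rintro (_ | i) hi
    · simp [hΔ0]
    · simp [hΔ i (by omega)]
  have hgr_le := norm_inv_smul_sum_range_inv_smul_sum_le_sup'
    (nonempty_range_add_one.product ⟨⟨0, hB⟩, mem_univ _⟩) hΔavg
  rw [← hη, ← hgr t (by omega)] at hgr_le
  refine le_trans ?_ (one_sub_two_div_mul_add_le t.cast_nonneg
    (mul_nonneg (inv_nonneg.2 hβpos.le) ((norm_nonneg _).trans hgr_le))
    ((norm_nonneg _).trans (hb t (by omega))))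
  obtain ⟨h0, h1⟩ := two_div_add_three_mem_Icc t t.cast_nonneg
  rw [hxs t (by omega), hτ_eq t (by omega)]
  refine (norm_one_sub_smul_add_smul_sub_le h0 h1 _ _ _).trans ?_
  gcongr _ * ?_ + _ * ?_
  · rw [hy t (by omega), hη, div_eq_inv_mul bmax]
    refine (hCconv.norm_proj_sub_smul_add_smul_sub_le hproj (hxC t (by omega))
      (inv_nonneg.2 hβpos.le) (by positivity) _ _).trans ?_
    gcongr
    exact hb t (by omega)
  · rw [hz t (by omega), ← dist_eq_norm]
    exact Metric.dist_le_diam_of_mem hCbdd (hproj _).1 (hxC t (by omega))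

/-- bound on consecutive iterate movement in Algorithm 1
(Accelerated-DP-SRGD) with `η_t = t + 1`.  With the index shift `t := s + 1`,
the claim `‖x_t − x_{t−1}‖ ≤ (1/β)·max_{i ≤ t−1, d ∈ ℬ_i} ‖Δ_i(d)‖ + b_max/(t+1)
+ 2‖C‖/(t+2)` for `1 ≤ t ≤ T−1` reads as below (the `i = 0` term uses the
convention `η_{−1} = 0`, `x_{−1} = 0`). -/
theorem stmt_3 {n : ℕ} (C : Set (EuclideanSpace ℝ (Fin n)))
    (hCne : C.Nonempty) (hCclosed : IsClosed C)
    (hCbdd : Bornology.IsBounded C) (hCconv : Convex ℝ C)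
    (hC0 : (0 : EuclideanSpace ℝ (Fin n)) ∈ C)
    (proj : EuclideanSpace ℝ (Fin n) → EuclideanSpace ℝ (Fin n))
    (hproj : ∀ u, proj u ∈ C ∧ ∀ v ∈ C, ‖proj u - u‖ ≤ ‖v - u‖)
    (𝒟 : Type*) (f : EuclideanSpace ℝ (Fin n) → 𝒟 → ℝ)
    (G : EuclideanSpace ℝ (Fin n) → 𝒟 → EuclideanSpace ℝ (Fin n)) (L M : ℝ)
    (hGgrad : ∀ d x, HasGradientAt (fun y => f y d) (G x d) x)
    (hGlip : ∀ d, LipschitzWith M.toNNReal (fun x => G x d))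
    (hGbd : ∀ d, ∀ x ∈ C, ‖G x d‖ ≤ L)
    (T B : ℕ) (hT : 1 ≤ T) (hB : 0 < B)
    (ℬ : ℕ → Fin B → 𝒟)
    (η : ℕ → ℝ) (hη : ∀ t, η t = t + 1)
    (β : ℝ) (hβpos : 0 < β)
    (b : ℕ → EuclideanSpace ℝ (Fin n)) (bmax : ℝ) (hb : ∀ t < T, ‖b t‖ ≤ bmax)
    (x z y Δ gr : ℕ → EuclideanSpace ℝ (Fin n)) (τ : ℕ → ℝ)
    (hτ : ∀ t ≤ T, τ t = η t / ∑ i ∈ Finset.range (t + 1), η i)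
    (hx0 : x 0 = 0) (hz0 : z 0 = 0)
    (hΔ0 : Δ 0 = (B : ℝ)⁻¹ • ∑ i : Fin B, η 0 • G (x 0) (ℬ 0 i))
    (hΔ : ∀ t, t + 1 < T →
      Δ (t + 1) = (B : ℝ)⁻¹ • ∑ i : Fin B,
        (η (t + 1) • G (x (t + 1)) (ℬ (t + 1) i) - η t • G (x t) (ℬ (t + 1) i)))
    (hgr : ∀ t < T, gr t = (η t)⁻¹ • ∑ i ∈ Finset.range (t + 1), Δ i)
    (hz : ∀ t < T, z (t + 1) = proj (z t - (η t / β) • gr t + b t))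
    (hy : ∀ t < T, y (t + 1) = proj (x t - β⁻¹ • gr t + (η t)⁻¹ • b t))
    (hxs : ∀ t < T, x (t + 1) = (1 - τ (t + 1)) • y (t + 1) + τ (t + 1) • z (t + 1)) :
    ∀ t, t + 1 < T →
      ‖x (t + 1) - x t‖ ≤
        β⁻¹ * ((Finset.range (t + 1) ×ˢ (Finset.univ : Finset (Fin B))).sup'
            (Finset.Nonempty.product
              (Finset.nonempty_range_iff.mpr (Nat.succ_ne_zero t))
              (Finset.univ_nonempty_iff.mpr (Fin.pos_iff_nonempty.mp hB)))
            (fun p => ‖η p.1 • G (x p.1) (ℬ p.1 p.2) -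
                (if p.1 = 0 then (0 : EuclideanSpace ℝ (Fin n))
                  else η (p.1 - 1) • G (x (p.1 - 1)) (ℬ p.1 p.2))‖))
          + bmax / (t + 2) + 2 * Metric.diam C / (t + 3) :=
  stmt_3_general C hCbdd hCconv hC0 proj hproj 𝒟 G T B hB ℬ η hη β hβpos b bmax hb x z y Δ gr τ hτ
    hx0 hΔ0 hΔ hgr hz hy hxs
end

section
/- Let F : ℝ^n → ℝ be convex and differentiable, let S' ≥ 0 and η > 0, set S = S' + η and τ = η/S, and let y, z, x* ∈ ℝ^n be arbitrary points with x = (1 − τ)·y + τ·z. Then −S'·(F(y) − F(x)) + η·(F(x) − F(x*)) ≤ η·⟨∇F(x), z − x*⟩. -/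
open scoped InnerProductSpace

/-!
With `τ = η / (S' + η)`, the point `x` is the barycentre of `y` and `z` with weights `S'` and `η`,
so `S' • (y - x) + η • (z - x) = 0`. Adding the tangent-plane inequalities of the convex function
`F` at `x`, towards `y` with weight `S'` and towards `x*` with weight `η`, the gradient terms
collapse to `η * ⟪∇F x, z - x*⟫`.
-/

theorem ConvexOn.apply_sub_le_of_hasFDerivAt {E : Type*} [NormedAddCommGroup E] [NormedSpace ℝ E]
    {s : Set E} {f : E → ℝ} {f' : E →L[ℝ] ℝ} {a b : E}
    (hf : ConvexOn ℝ s f) (ha : a ∈ s) (hb : b ∈ s) (hf' : HasFDerivAt f f' a) :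
    f' (b - a) ≤ f b - f a := by
  let ℓ : ℝ →ᵃ[ℝ] E := AffineMap.lineMap a b
  have hline : ConvexOn ℝ (ℓ ⁻¹' s) (f ∘ ℓ) := hf.comp_affineMap ℓ
  have hderiv : HasDerivAt (f ∘ ℓ) (f' (b - a)) 0 := by
    have hf'0 : HasFDerivAt f f' (ℓ 0) := by simpa [ℓ] using hf'
    exact hf'0.comp_hasDerivAt 0 AffineMap.hasDerivAt_lineMap
  simpa [slope, ℓ] using
    hline.le_slope_of_hasDerivAt (x := 0) (y := 1) (by simpa [ℓ]) (by simpa [ℓ]) one_pos hderiv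

theorem ConvexOn.inner_gradient_sub_le {E : Type*} [NormedAddCommGroup E]
    [InnerProductSpace ℝ E] [CompleteSpace E] {s : Set E} {f : E → ℝ} {a b : E}
    (hf : ConvexOn ℝ s f) (ha : a ∈ s) (hb : b ∈ s) (hfa : DifferentiableAt ℝ f a) :
    ⟪gradient f a, b - a⟫_ℝ ≤ f b - f a := by
  simpa using hf.apply_sub_le_of_hasFDerivAt ha hb hfa.hasGradientAt.hasFDerivAt

theorem smul_sub_add_smul_sub_interpolate_eq_zero {K E : Type*} [Field K] [AddCommGroup E]
    [Module K E] {S' η : K} (h : S' + η ≠ 0) (y z : E) :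
    let x := (1 - η / (S' + η)) • y + (η / (S' + η)) • z
    S' • (y - x) + η • (z - x) = 0 := by
  intro x
  set τ := η / (S' + η)
  have hcoeff : S' * τ - η * (1 - τ) = 0 := by
    simp only [τ]
    field_simp
    ring
  calc S' • (y - x) + η • (z - x) = (S' * τ - η * (1 - τ)) • (y - z) := by
        simp only [x]
        module
    _ = 0 := by rw [hcoeff, zero_smul]

/-- convexity coupling inequality for the interpolated point. -/
theorem stmt_4 {n : ℕ} (F : EuclideanSpace ℝ (Fin n) → ℝ)
    (hFconv : ConvexOn ℝ Set.univ F) (hFdiff : Differentiable ℝ F)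
    (S' η : ℝ) (hS' : 0 ≤ S') (hη : 0 < η)
    (S τ : ℝ) (hS : S = S' + η) (hτ : τ = η / S)
    (y z xstar x : EuclideanSpace ℝ (Fin n))
    (hx : x = (1 - τ) • y + τ • z) :
    -S' * (F y - F x) + η * (F x - F xstar) ≤ η * ⟪gradient F x, z - xstar⟫_ℝ := by
  set g := gradient F x
  have hy : ⟪g, y - x⟫_ℝ ≤ F y - F x :=
    hFconv.inner_gradient_sub_le trivial trivial (hFdiff x)
  have hxstar : ⟪g, xstar - x⟫_ℝ ≤ F xstar - F x :=
    hFconv.inner_gradient_sub_le trivial trivial (hFdiff x)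
  have hbalance : S' * ⟪g, y - x⟫_ℝ + η * ⟪g, z - x⟫_ℝ = 0 := by
    have h := smul_sub_add_smul_sub_interpolate_eq_zero (ne_of_gt (by linarith : 0 < S' + η)) y z
    rw [← hS, ← hτ, ← hx] at h
    simpa [inner_add_right, real_inner_smul_right] using congrArg (⟪g, ·⟫_ℝ) h
  have hsplit : ⟪g, z - xstar⟫_ℝ = ⟪g, z - x⟫_ℝ - ⟪g, xstar - x⟫_ℝ := by
    rw [← inner_sub_right, sub_sub_sub_cancel_right]
  rw [hsplit]
  linarith [mul_le_mul_of_nonneg_left hy hS', mul_le_mul_of_nonneg_left hxstar hη.le]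
end
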